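/- arXiv:math/0403353 — 5 statements merged into one kernel-verified Lean document; each statement's English description precedes it below -/
import Mathlib

section
/- For all natural numbers n, the sum over k from 0 to n of C(n,k)^2 * H_k equals C(2n,n) * (2*H_n - H_{2n}), where H_m denotes the m-th harmonic number. -/
/-!
Differentiate Vandermonde's identity `∑ₖ C(n,k) C(x,k) = C(x+n,n)`, an identity of polynomials
in `x`, and evaluate at `x = n`. The logarithmic derivative of `C(x,k)` at `x = m ≥ k` is
`∑_{i<k} 1/(m-i) = H_m - H_{m-k}`, so the left side becomes `∑ₖ C(n,k)² (H_n - H_{n-k})` and the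
right side `C(2n,n) (H_{2n} - H_n)`. Reflecting `k ↦ n - k` and `∑ₖ C(n,k)² = C(2n,n)` finish.
-/

open Finset Polynomial
open scoped Nat

def harmonicQ (m : Nat) : ℚ := ∑ j ∈ Finset.range m, (1 : ℚ) / (j + 1)

theorem eval_derivative_prod_X_sub_C {ι K : Type*} [Field K] [DecidableEq ι] (s : Finset ι)
    (a : ι → K) {x : K} (hx : ∀ i ∈ s, x ≠ a i) :
    (derivative (∏ i ∈ s, (X - C (a i)))).eval x = (∏ i ∈ s, (x - a i)) * ∑ i ∈ s, (x - a i)⁻¹ := by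
  rw [derivative_prod_finset, eval_finsetSum, mul_sum]
  refine sum_congr rfl fun i hi => ?_
  simp only [derivative_X_sub_C, mul_one, eval_prod, eval_sub, eval_X, eval_C]
  rw [← mul_prod_erase s _ hi]
  field_simp [sub_ne_zero.2 (hx i hi)]

theorem Nat.sum_range_choose_mul_choose (m n : ℕ) :
    ∑ k ∈ range (n + 1), m.choose k * n.choose k = (m + n).choose n := by
  rw [add_choose_eq, Nat.sum_antidiagonal_eq_sum_range_succ_mk]
  refine sum_congr rfl fun k hk => ?_
  rw [choose_symm (mem_range_succ_iff.mp hk)]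

theorem harmonicQ_succ (m : ℕ) : harmonicQ (m + 1) = harmonicQ m + ((m : ℚ) + 1)⁻¹ := by
  rw [harmonicQ, harmonicQ, sum_range_succ, one_div]

theorem harmonicQ_sub_harmonicQ_sub {m k : ℕ} (hk : k ≤ m) :
    harmonicQ m - harmonicQ (m - k) = ∑ i ∈ range k, ((m : ℚ) - i)⁻¹ := by
  induction k with
  | zero => simp
  | succ k ih =>
    have hsucc : m - k = m - (k + 1) + 1 := by omega
    rw [sum_range_succ, ← ih (by omega), hsucc, harmonicQ_succ,
      Nat.cast_sub (by omega : k + 1 ≤ m)]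
    push_cast
    ring

noncomputable def choosePoly (k : ℕ) : ℚ[X] := C (k ! : ℚ)⁻¹ * ∏ i ∈ range k, (X - C (i : ℚ))

theorem prod_range_natCast_sub (m k : ℕ) :
    ∏ i ∈ range k, ((m : ℚ) - i) = k ! * m.choose k := by
  rw [← descPochhammer_eval_eq_prod_range, descPochhammer_eval_eq_descFactorial,
    Nat.descFactorial_eq_factorial_mul_choose, Nat.cast_mul]

theorem eval_choosePoly (m k : ℕ) : (choosePoly k).eval (m : ℚ) = m.choose k := by
  simp only [choosePoly, eval_mul, eval_C, eval_prod, eval_sub, eval_X, prod_range_natCast_sub]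
  field_simp

theorem eval_derivative_choosePoly {m k : ℕ} (hk : k ≤ m) :
    (derivative (choosePoly k)).eval (m : ℚ) = m.choose k * (harmonicQ m - harmonicQ (m - k)) := by
  have hne : ∀ i ∈ range k, (m : ℚ) ≠ i := fun i hi => by
    have := mem_range.mp hi
    exact_mod_cast (by omega : m ≠ i)
  rw [choosePoly, derivative_C_mul, eval_mul, eval_C, eval_derivative_prod_X_sub_C _ _ hne,
    prod_range_natCast_sub, harmonicQ_sub_harmonicQ_sub hk]
  field_simp

theorem sum_choose_mul_choosePoly (n : ℕ) :
    ∑ k ∈ range (n + 1), C (n.choose k : ℚ) * choosePoly k = (choosePoly n).comp (X + C (n : ℚ)) := by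
  refine eq_of_infinite_eval_eq _ _ (Set.infinite_of_injective_forall_mem Nat.cast_injective
    fun m : ℕ => ?_)
  simp only [Set.mem_ofPred_eq, eval_finsetSum, eval_mul, eval_C, eval_comp, eval_add, eval_X]
  simp only [eval_choosePoly, ← Nat.cast_add, ← Nat.sum_range_choose_mul_choose m n]
  push_cast
  exact sum_congr rfl fun k _ => mul_comm _ _

theorem sum_choose_sq_mul_harmonicQ_sub (n : ℕ) :
    ∑ k ∈ range (n + 1), (n.choose k : ℚ) ^ 2 * (harmonicQ n - harmonicQ (n - k))
      = ((2 * n).choose n : ℚ) * (harmonicQ (2 * n) - harmonicQ n) := by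
  have h := congrArg (fun p => (derivative p).eval (n : ℚ)) (sum_choose_mul_choosePoly n)
  simp only [derivative_sum, derivative_C_mul, eval_finsetSum, eval_mul, eval_C, derivative_comp,
    derivative_add, derivative_X, derivative_C, add_zero, one_mul, eval_comp, eval_add,
    eval_X, ← Nat.cast_add] at h
  rw [eval_derivative_choosePoly le_add_self, Nat.add_sub_cancel, ← two_mul] at h
  rw [← h]
  refine sum_congr rfl fun k hk => ?_
  rw [eval_derivative_choosePoly (mem_range_succ_iff.mp hk)]
  ring

theorem sum_range_choose_sq_mul_reflect (n : ℕ) (f : ℕ → ℚ) :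
    ∑ k ∈ range (n + 1), (n.choose k : ℚ) ^ 2 * f (n - k)
      = ∑ k ∈ range (n + 1), (n.choose k : ℚ) ^ 2 * f k := by
  rw [← sum_range_reflect]
  refine sum_congr rfl fun k hk => ?_
  rw [add_tsub_cancel_right, Nat.sub_sub_self (mem_range_succ_iff.mp hk),
    Nat.choose_symm (mem_range_succ_iff.mp hk)]

theorem stmt0 (n : ℕ) :
    ∑ k ∈ range (n + 1), (n.choose k : ℚ) ^ 2 * harmonicQ k
      = ((2 * n).choose n : ℚ) * (2 * harmonicQ n - harmonicQ (2 * n)) := by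
  have h := sum_choose_sq_mul_harmonicQ_sub n
  have hsq : ∑ k ∈ range (n + 1), (n.choose k : ℚ) ^ 2 = ((2 * n).choose n : ℚ) := by
    exact_mod_cast Nat.sum_range_choose_sq n
  simp only [mul_sub, sum_sub_distrib, ← sum_mul, hsq,
    sum_range_choose_sq_mul_reflect n harmonicQ] at h
  linarith
end

section
/- For natural numbers m ≤ n, the derivative at x = 0 of the function x ↦ C(x+n, m) (generalized binomial coefficient in x) equals C(n,m) * (H_n - H_{n-m}). -/
open Finset

noncomputable def harmonicR (m : Nat) : ℝ := ∑ j ∈ Finset.range m, (1 : ℝ) / (j + 1)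

/-!
The polynomial `x ↦ ∏_{i<m} (x + n - i)` has logarithmic derivative `∑_{i<m} 1/(x + n - i)`,
which at `x = 0` is `∑_{i<m} 1/(n - i) = H_n - H_{n-m}`, while its value at `0` is the falling
factorial `n (n-1) ⋯ (n-m+1) = m! C(n,m)`.
-/

theorem harmonicR_succ (k : ℕ) : harmonicR (k + 1) = harmonicR k + 1 / (k + 1) := by
  simp only [harmonicR, sum_range_succ]

theorem sum_range_inv_nat_sub (n m : ℕ) (hmn : m ≤ n) :
    ∑ i ∈ range m, ((n : ℝ) - i)⁻¹ = harmonicR n - harmonicR (n - m) := by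
  induction m with
  | zero => simp
  | succ m ih =>
    have hsplit : n - m = (n - (m + 1)) + 1 := by omega
    have hcast : ((n - (m + 1) : ℕ) : ℝ) + 1 = n - m := by
      rw [Nat.cast_sub hmn]; push_cast; ring
    rw [sum_range_succ, ih (by omega), hsplit, harmonicR_succ, hcast, one_div]
    ring

theorem hasDerivAt_prod_add_const {𝕜 ι : Type*} [NontriviallyNormedField 𝕜]
    (s : Finset ι) (c : ι → 𝕜) (x : 𝕜) (hc : ∀ i ∈ s, x + c i ≠ 0) :
    HasDerivAt (fun y => ∏ i ∈ s, (y + c i))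
      ((∏ i ∈ s, (x + c i)) * ∑ i ∈ s, (x + c i)⁻¹) x := by
  classical
  induction s using Finset.induction_on with
  | empty => simpa using hasDerivAt_const x (1 : 𝕜)
  | insert a s ha ih =>
    have hca : x + c a ≠ 0 := hc a (mem_insert_self a s)
    have hs := ih fun i hi => hc i (mem_insert_of_mem hi)
    simp only [prod_insert ha, sum_insert ha]
    refine (((hasDerivAt_id' x).add_const (c a)).fun_mul hs).congr_deriv ?_
    field_simp

theorem cast_choose_eq_prod_div_factorial (n m : ℕ) :
    (n.choose m : ℝ) = (∏ i ∈ range m, ((n : ℝ) - i)) / m.factorial := by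
  rw [Nat.cast_choose_eq_descPochhammer_div, descPochhammer_eval_eq_prod_range]

theorem stmt4 (n m : ℕ) (hmn : m ≤ n) :
    deriv (fun x : ℝ => (∏ i ∈ Finset.range m, (x + n - i)) / (m.factorial : ℝ)) 0
      = (n.choose m : ℝ) * (harmonicR n - harmonicR (n - m)) := by
  have hne : ∀ i ∈ range m, (0 : ℝ) + (n - i) ≠ 0 := fun i hi => by
    have : (i : ℝ) < n := by exact_mod_cast (mem_range.mp hi).trans_le hmn
    linarith
  have hprod := hasDerivAt_prod_add_const (range m) (fun i => (n : ℝ) - i) 0 hne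
  simp only [add_sub_assoc, zero_add] at hprod ⊢
  rw [deriv_div_const, hprod.deriv, cast_choose_eq_prod_div_factorial,
    sum_range_inv_nat_sub n m hmn]
  ring
end

section
/- For all natural numbers n, the sum over k from 0 to n of C(n,k) * C(2n,k) * C(3n+k, k) * (H_{3n+k} - H_k) equals C(3n,n)^2 * (2*H_{3n} - H_n - H_{2n}). -/
open Finset

/-!
Deformed by a parameter `x`, the sum becomes the denominator-free Pfaff–Saalschütz identity
`∑ₖ C(n,k) C(2n,k) n! (x+3n+1)ₖ (x+k+1)ₙ₋ₖ = C(3n,n) n! (x+2n+1)ₙ`, valid in every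
commutative ring and proved, in the general Saalschütz form, by induction on the length of
the sum. Substituting the dual number `x = ε` and using
`(m+1+ε)ₖ = (m+1)ₖ (1 + (H_{m+k} - H_m) ε)`, the constant term gives
`∑ₖ C(n,k) C(2n,k) C(3n+k,k) = C(3n,n)²` and the coefficient of `ε` gives the same sum
weighted by `(H_{3n+k} - H_{3n}) + (H_n - H_k)`; the theorem is a linear combination of the two.
-/

open Polynomial
open scoped Nat

theorem descFactorial_mul_ascFactorial (m n k : ℕ) (hk : k ≤ n) :
    m.descFactorial k * (k + 1).ascFactorial (n - k) = m.choose k * n ! := by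
  rw [Nat.descFactorial_eq_factorial_mul_choose, mul_comm (k !), mul_assoc,
    Nat.factorial_mul_ascFactorial, Nat.add_sub_cancel' hk]

theorem choose_mul_choose_mul_factorial_mul_ascFactorial (n k : ℕ) (hk : k ≤ n) :
    n.choose k * (2 * n).choose k * n ! * (3 * n + 1).ascFactorial k *
        (k + 1).ascFactorial (n - k) =
      n ! ^ 2 * (n.choose k * (2 * n).choose k * (3 * n + k).choose k) := by
  have hn := Nat.factorial_mul_ascFactorial k (n - k)
  rw [Nat.add_sub_cancel' hk] at hn
  rw [Nat.ascFactorial_eq_factorial_mul_choose, ← hn]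
  ring

theorem choose_mul_factorial_mul_ascFactorial (n : ℕ) :
    (3 * n).choose n * n ! * (2 * n + 1).ascFactorial n = n ! ^ 2 * (3 * n).choose n ^ 2 := by
  rw [Nat.ascFactorial_eq_factorial_mul_choose, show 2 * n + n = 3 * n by ring]
  ring

noncomputable section Saalschutz

variable {R : Type*} [CommRing R]

theorem ascPochhammer_eval_succ_left (k : ℕ) (x : R) :
    (ascPochhammer R (k + 1)).eval x = x * (ascPochhammer R k).eval (x + 1) := by
  rw [ascPochhammer_succ_left, eval_mul, eval_X, eval_comp, eval_add, eval_X, eval_one]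

/-- `₃F₂(-m, a, b; c, 1 + a + b - c - m; 1)` is `∑ₖ saalschutzTerm m a b c k` divided by
`(c)ₘ (1 + a + b - c - m)ₘ`; clearing these denominators makes the Pfaff–Saalschütz identity
`saalschutzSum_eq` hold in every commutative ring. -/
def saalschutzTerm (m : ℕ) (a b c : R) (k : ℕ) : R :=
  (-1) ^ k * m.choose k * (ascPochhammer R k).eval a * (ascPochhammer R k).eval b *
    (ascPochhammer R (m - k)).eval (c + k) *
    (ascPochhammer R (m - k)).eval (a + b - c + 1 - m + k)

def saalschutzSum (m : ℕ) (a b c : R) : R :=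
  ∑ k ∈ range (m + 1), saalschutzTerm m a b c k

theorem choose_succ_succ_mul_add (m j : ℕ) (e : R) :
    ((m + 1).choose (j + 1) : R) * (e + j + 1) =
      e * m.choose (j + 1) + m.choose j * (e + m + 1) := by
  have hpascal : ((m + 1).choose (j + 1) : R) = m.choose j + m.choose (j + 1) := by
    rw [Nat.choose_succ_succ, Nat.cast_add]
  have habsorb : ((m : R) + 1) * m.choose j = (m + 1).choose (j + 1) * (j + 1) := by
    have h := congrArg (Nat.cast (R := R)) (Nat.add_one_mul_choose_eq m j)
    push_cast at h
    exact h
  linear_combination e * hpascal - habsorb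

theorem ascPochhammer_saalschutz_step (m j : ℕ) (c e : R) :
    ((m + 1).choose (j + 1) : R) * (ascPochhammer R (m - j)).eval (c + (j + 1)) *
        (ascPochhammer R (m - j)).eval (e + (j + 1)) =
      (c + m) * e * m.choose (j + 1) * (ascPochhammer R (m - (j + 1))).eval (c + (j + 1)) *
          (ascPochhammer R (m - (j + 1))).eval (e + (j + 1) + 1) +
        m.choose j * (ascPochhammer R (m - j)).eval (c + (j + 1)) *
          (ascPochhammer R (m - j)).eval (e + (j + 1) + 1) := by
  rcases lt_trichotomy j m with hj | rfl | hj
  · obtain ⟨i, hi⟩ : ∃ i, m = j + 1 + i := ⟨m - (j + 1), by omega⟩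
    subst hi
    rw [show j + 1 + i - j = i + 1 by omega, show j + 1 + i - (j + 1) = i by omega,
      ascPochhammer_succ_eval, ascPochhammer_eval_succ_left, ascPochhammer_succ_eval]
    have key := choose_succ_succ_mul_add (R := R) (j + 1 + i) j e
    push_cast at key ⊢
    linear_combination (ascPochhammer R i).eval (c + (j + 1)) *
        (ascPochhammer R i).eval (e + (j + 1) + 1) * (c + (j + 1 + i)) * key
  · simp
  · simp [Nat.choose_eq_zero_of_lt, hj, hj.trans (Nat.lt_succ_self j)]

theorem saalschutzTerm_succ_succ (m j : ℕ) (a b c : R) :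
    saalschutzTerm (m + 1) a b c (j + 1) =
      (c + m) * (a + b - c - m) * saalschutzTerm m a b c (j + 1) -
        a * b * saalschutzTerm m (a + 1) (b + 1) (c + 1) j := by
  set e := a + b - c - m
  have h₁ : c + ((j + 1 : ℕ) : R) = c + (j + 1) := by push_cast; ring
  have h₂ : a + b - c + 1 - ((m + 1 : ℕ) : R) + ((j + 1 : ℕ) : R) = e + (j + 1) := by
    push_cast; ring
  have h₃ : a + b - c + 1 - m + ((j + 1 : ℕ) : R) = e + (j + 1) + 1 := by push_cast; ring
  have h₄ : c + 1 + j = c + (j + 1) := by ring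
  have h₅ : a + 1 + (b + 1) - (c + 1) + 1 - m + j = e + (j + 1) + 1 := by ring
  unfold saalschutzTerm
  rw [Nat.add_sub_add_right, h₁, h₂, h₃, h₄, h₅, ascPochhammer_eval_succ_left j a,
    ascPochhammer_eval_succ_left j b]
  linear_combination (-1) ^ (j + 1) * (a * (ascPochhammer R j).eval (a + 1)) *
    (b * (ascPochhammer R j).eval (b + 1)) * ascPochhammer_saalschutz_step m j c e

theorem saalschutzTerm_succ_zero (m : ℕ) (a b c : R) :
    saalschutzTerm (m + 1) a b c 0 = (c + m) * (a + b - c - m) * saalschutzTerm m a b c 0 := by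
  simp only [saalschutzTerm, pow_zero, Nat.choose_zero_right, Nat.cast_one, ascPochhammer_zero,
    eval_one, Nat.sub_zero, Nat.cast_zero, add_zero, one_mul, mul_one]
  rw [ascPochhammer_succ_eval, ascPochhammer_eval_succ_left,
    show a + b - c + 1 - ((m + 1 : ℕ) : R) = a + b - c - m by push_cast; ring,
    show a + b - c - m + 1 = a + b - c + 1 - m by ring]
  ring

theorem saalschutzTerm_of_lt (m : ℕ) (a b c : R) {k : ℕ} (hk : m < k) :
    saalschutzTerm m a b c k = 0 := by
  simp [saalschutzTerm, Nat.choose_eq_zero_of_lt hk]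

theorem saalschutzSum_succ (m : ℕ) (a b c : R) :
    saalschutzSum (m + 1) a b c =
      (c + m) * (a + b - c - m) * saalschutzSum m a b c -
        a * b * saalschutzSum m (a + 1) (b + 1) (c + 1) := by
  have hS : saalschutzSum m a b c = ∑ k ∈ range (m + 2), saalschutzTerm m a b c k := by
    rw [saalschutzSum, sum_range_succ _ (m + 1), saalschutzTerm_of_lt m a b c (Nat.lt_succ_self m),
      add_zero]
  rw [hS, saalschutzSum, saalschutzSum, sum_range_succ', sum_range_succ' _ (m + 1)]
  simp only [saalschutzTerm_succ_succ, saalschutzTerm_succ_zero, sum_sub_distrib, ← mul_sum]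
  ring

theorem saalschutzSum_eq (m : ℕ) (a b c : R) :
    saalschutzSum m a b c =
      (-1) ^ m * (ascPochhammer R m).eval (c - a) * (ascPochhammer R m).eval (c - b) := by
  induction m generalizing a b c with
  | zero => simp [saalschutzSum, saalschutzTerm]
  | succ m ih =>
    rw [saalschutzSum_succ, ih, ih, ascPochhammer_succ_eval, ascPochhammer_succ_eval,
      show c + 1 - (a + 1) = c - a by ring, show c + 1 - (b + 1) = c - b by ring]
    ring

theorem sum_choose_mul_ascPochhammer_eval (n : ℕ) (x : R) :
    ∑ k ∈ range (n + 1), ((n.choose k * (2 * n).choose k * n ! : ℕ) : R) *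
        (ascPochhammer R k).eval (x + (3 * n + 1 : ℕ)) *
        (ascPochhammer R (n - k)).eval (x + (k + 1 : ℕ)) =
      ((3 * n).choose n * n ! : ℕ) * (ascPochhammer R n).eval (x + (2 * n + 1 : ℕ)) := by
  have H := saalschutzSum_eq n (-((2 * n : ℕ) : R)) (x + (3 * n + 1 : ℕ)) 1
  rw [saalschutzSum] at H
  convert H using 1
  · refine sum_congr rfl fun k hk => ?_
    have hkn : k ≤ n := mem_range_succ_iff.mp hk
    rw [saalschutzTerm, ascPochhammer_eval_neg_eq_descPochhammer,
      descPochhammer_eval_eq_descFactorial,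
      show (1 : R) + k = ((k + 1 : ℕ) : R) by push_cast; ring, ← Nat.cast_ascFactorial,
      show -((2 * n : ℕ) : R) + (x + (3 * n + 1 : ℕ)) - 1 + 1 - n + k = x + (k + 1 : ℕ) by
        push_cast; ring,
      mul_assoc (n.choose k), ← descFactorial_mul_ascFactorial _ n k hkn]
    have hsign : ((-1 : R) ^ k) * (-1) ^ k = 1 := by rw [← mul_pow]; simp
    rw [Nat.cast_mul, Nat.cast_mul]
    linear_combination -(n.choose k : R) * (2 * n).descFactorial k *
      (k + 1).ascFactorial (n - k) * (ascPochhammer R k).eval (x + (3 * n + 1 : ℕ)) *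
      (ascPochhammer R (n - k)).eval (x + (k + 1 : ℕ)) * hsign
  · have hsign : ((-1 : R) ^ n) * (-1) ^ n = 1 := by rw [← mul_pow]; simp
    rw [show (1 : R) - -((2 * n : ℕ) : R) = ((2 * n + 1 : ℕ) : R) by push_cast; ring,
      ← Nat.cast_ascFactorial, Nat.ascFactorial_eq_factorial_mul_choose,
      show 2 * n + n = 3 * n by ring,
      show (1 : R) - (x + (3 * n + 1 : ℕ)) = -(x + (3 * n : ℕ)) by push_cast; ring,
      ascPochhammer_eval_neg_eq_descPochhammer, descPochhammer_eval_eq_ascPochhammer,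
      show x + ((3 * n : ℕ) : R) - n + 1 = x + (2 * n + 1 : ℕ) by push_cast; ring, Nat.cast_mul,
      Nat.cast_mul]
    linear_combination -((3 * n).choose n * n ! : R) *
      (ascPochhammer R n).eval (x + (2 * n + 1 : ℕ)) * hsign

end Saalschutz

section DualNumber

open DualNumber TrivSqZeroExt

variable {R : Type*} [CommRing R]

theorem sum_inl_mul_one_add_inl_mul_eps_eq_iff {ι : Type*} (s : Finset ι) (w h : ι → R)
    (W H : R) :
    ∑ i ∈ s, (inl (w i) * (1 + inl (h i) * ε) : R[ε]) = inl W * (1 + inl H * ε) ↔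
      ∑ i ∈ s, w i = W ∧ ∑ i ∈ s, w i * h i = W * H := by
  simp [TrivSqZeroExt.ext_iff, fst_sum, snd_sum]

theorem inl_mul_one_add_inl_mul_eps_mul (a b s t : R) :
    (inl a * (1 + inl s * ε) : R[ε]) * (inl b * (1 + inl t * ε)) =
      inl (a * b) * (1 + inl (s + t) * ε) := by
  rw [inl_mul, inl_add]
  linear_combination inl a * inl b * inl s * inl t * eps_mul_eps (R := R)

theorem ascPochhammer_eval_eps_add_natCast (m k : ℕ) :
    (ascPochhammer ℚ[ε] k).eval (ε + ((m + 1 : ℕ) : ℚ[ε])) =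
      ((m + 1).ascFactorial k : ℚ[ε]) * (1 + inl (harmonic (m + k) - harmonic m) * ε) := by
  induction k with
  | zero => simp
  | succ k ih =>
    have hN : ((m + k + 1 : ℕ) : ℚ[ε]) * inl ((m + k + 1 : ℕ) : ℚ)⁻¹ = 1 := by
      rw [← inl_natCast, ← inl_mul, mul_inv_cancel₀ (by positivity), inl_one]
    rw [ascPochhammer_succ_eval, ih, Nat.ascFactorial_succ, ← add_assoc m k 1, harmonic_succ,
      add_sub_right_comm, inl_add, Nat.cast_mul]
    push_cast at hN ⊢
    linear_combination -((m + 1).ascFactorial k : ℚ[ε]) * ε * hN +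
      ((m + 1).ascFactorial k : ℚ[ε]) * inl (harmonic (m + k) - harmonic m) *
        eps_mul_eps (R := ℚ)

theorem sum_choose_mul_choose_mul_choose_and_harmonic (n : ℕ) :
    ∑ k ∈ range (n + 1), (n.choose k * (2 * n).choose k * (3 * n + k).choose k : ℚ) =
        ((3 * n).choose n : ℚ) ^ 2 ∧
      ∑ k ∈ range (n + 1), (n.choose k * (2 * n).choose k * (3 * n + k).choose k : ℚ) *
          (harmonic (3 * n + k) - harmonic (3 * n) + (harmonic n - harmonic k)) =
        ((3 * n).choose n : ℚ) ^ 2 * (harmonic (3 * n) - harmonic (2 * n)) := by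
  have H := sum_choose_mul_ascPochhammer_eval n (ε : ℚ[ε])
  simp only [ascPochhammer_eval_eps_add_natCast] at H
  have hterm : ∀ k ∈ range (n + 1),
      ((n.choose k * (2 * n).choose k * n ! : ℕ) : ℚ[ε]) *
          (((3 * n + 1).ascFactorial k : ℚ[ε]) *
            (1 + inl (harmonic (3 * n + k) - harmonic (3 * n)) * ε)) *
          (((k + 1).ascFactorial (n - k) : ℚ[ε]) *
            (1 + inl (harmonic (k + (n - k)) - harmonic k) * ε)) =
        inl ((n ! : ℚ) ^ 2 * (n.choose k * (2 * n).choose k * (3 * n + k).choose k)) *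
          (1 + inl (harmonic (3 * n + k) - harmonic (3 * n) + (harmonic n - harmonic k)) * ε) := by
    intro k hk
    have hkn : k ≤ n := mem_range_succ_iff.mp hk
    have hw := choose_mul_choose_mul_factorial_mul_ascFactorial n k hkn
    simp only [Nat.add_sub_cancel' hkn, ← inl_natCast]
    rw [← mul_assoc (inl _) (inl _), ← inl_mul, inl_mul_one_add_inl_mul_eps_mul]
    congr 2
    exact_mod_cast hw
  have htotal : (((3 * n).choose n * n ! : ℕ) : ℚ[ε]) *
        (((2 * n + 1).ascFactorial n : ℚ[ε]) *
          (1 + inl (harmonic (2 * n + n) - harmonic (2 * n)) * ε)) =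
      inl ((n ! : ℚ) ^ 2 * ((3 * n).choose n) ^ 2) *
        (1 + inl (harmonic (3 * n) - harmonic (2 * n)) * ε) := by
    rw [show 2 * n + n = 3 * n by ring, ← mul_assoc, ← Nat.cast_mul,
      choose_mul_factorial_mul_ascFactorial, ← inl_natCast]
    push_cast
    rfl
  rw [sum_congr rfl hterm, htotal, sum_inl_mul_one_add_inl_mul_eps_eq_iff] at H
  obtain ⟨hsum, hweighted⟩ := H
  have hfact : (n ! : ℚ) ^ 2 ≠ 0 := by positivity
  simp only [mul_assoc ((n ! : ℚ) ^ 2), ← mul_sum] at hsum hweighted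
  exact ⟨mul_left_cancel₀ hfact hsum, mul_left_cancel₀ hfact hweighted⟩

end DualNumber

theorem harmonicQ_eq_harmonic (m : ℕ) : harmonicQ m = harmonic m := by
  simp [harmonicQ, harmonic, one_div]

theorem stmt7 (n : ℕ) :
    ∑ k ∈ range (n + 1), (n.choose k : ℚ) * ((2 * n).choose k : ℚ) * ((3 * n + k).choose k : ℚ) *
        (harmonicQ (3 * n + k) - harmonicQ k)
      = ((3 * n).choose n : ℚ) ^ 2 * (2 * harmonicQ (3 * n) - harmonicQ n - harmonicQ (2 * n)) := by
  obtain ⟨hsum, hweighted⟩ := sum_choose_mul_choose_mul_choose_and_harmonic n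
  simp only [harmonicQ_eq_harmonic]
  calc _ = ∑ k ∈ range (n + 1),
        ((n.choose k * (2 * n).choose k * (3 * n + k).choose k : ℚ) *
            (harmonic (3 * n + k) - harmonic (3 * n) + (harmonic n - harmonic k)) +
          (n.choose k * (2 * n).choose k * (3 * n + k).choose k : ℚ) *
            (harmonic (3 * n) - harmonic n)) := sum_congr rfl fun k _ => by ring
    _ = _ := by
      rw [sum_add_distrib, hweighted, ← sum_mul, hsum]
      ring
end

section
/- For all natural numbers n, the sum over k from 0 to n of C(n,k) * (1 + (n - 2k) * H_k) equals 1, where n - 2k is interpreted as an integer (possibly negative). -/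
/-!
The summand is the forward difference in `k` of `F k = (k H_k - 1) C(n,k)`: this follows from
`H_{k+1} = H_k + 1/(k+1)` and `(k+1) C(n,k+1) = (n-k) C(n,k)`. Hence the sum telescopes to
`F (n+1) - F 0 = 0 - (-1) = 1`.
-/

open Finset

lemma harmonicQ_succ_s10 (k : ℕ) : harmonicQ (k + 1) = harmonicQ k + 1 / (k + 1) := by
  simp [harmonicQ, sum_range_succ]

lemma cast_choose_succ_right_eq {R : Type*} [CommRing R] (n k : ℕ) :
    (n.choose (k + 1) : R) * (k + 1) = n.choose k * (n - k) := by
  rcases le_or_gt k n with hk | hk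
  · simpa [Nat.cast_sub hk] using congrArg (Nat.cast (R := R)) (Nat.choose_succ_right_eq n k)
  · simp [Nat.choose_eq_zero_of_lt hk, Nat.choose_eq_zero_of_lt (Nat.lt_succ_of_lt hk)]

def binomHarmonicAntidiff (n k : ℕ) : ℚ := (k * harmonicQ k - 1) * n.choose k

lemma binomHarmonicAntidiff_succ_sub (n k : ℕ) :
    binomHarmonicAntidiff n (k + 1) - binomHarmonicAntidiff n k
      = (n.choose k : ℚ) * (1 + ((n : ℚ) - 2 * k) * harmonicQ k) := by
  have hchoose := cast_choose_succ_right_eq (R := ℚ) n k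
  have hk : (k : ℚ) + 1 ≠ 0 := by positivity
  simp only [binomHarmonicAntidiff, harmonicQ_succ_s10, Nat.cast_succ]
  field_simp
  linear_combination harmonicQ k * hchoose

lemma binomHarmonicAntidiff_zero_right (n : ℕ) : binomHarmonicAntidiff n 0 = -1 := by
  simp [binomHarmonicAntidiff]

lemma binomHarmonicAntidiff_succ_self (n : ℕ) : binomHarmonicAntidiff n (n + 1) = 0 := by
  simp [binomHarmonicAntidiff]

theorem stmt10 (n : ℕ) :
    ∑ k ∈ range (n + 1), (n.choose k : ℚ) * (1 + ((n : ℚ) - 2 * k) * harmonicQ k) = 1 := by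
  simp_rw [← binomHarmonicAntidiff_succ_sub, sum_range_sub,
    binomHarmonicAntidiff_succ_self, binomHarmonicAntidiff_zero_right]
  norm_num
end

section
/- For all natural numbers n, the sum over k from 0 to n of (1 - 2*(n - 2k)*H_k) / C(n,k)^2 equals 2*(n+1)^2/(n+2) * H_{n+1}. -/
open Finset

theorem Nat.cast_succ_mul_choose_succ {R : Type*} [CommRing R] (n k : ℕ) :
    ((k : R) + 1) * n.choose (k + 1) = ((n : R) - k) * n.choose k := by
  rcases le_or_gt k n with hk | hk
  · have h := congrArg (Nat.cast : ℕ → R) (Nat.choose_succ_right_eq n k)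
    push_cast [Nat.cast_sub hk] at h
    linear_combination h
  · simp [Nat.choose_eq_zero_of_lt hk, Nat.choose_eq_zero_of_lt (hk.trans (Nat.lt_succ_self k))]

section Field

variable {K : Type*} [Field K] [CharZero K]

theorem sum_range_succ_sub_two_mul_div_choose_sq {n k : ℕ} (hk : k ≤ n) :
    ∑ j ∈ range (k + 1), ((n : K) - 2 * j) / (n.choose j : K) ^ 2
      = (((n : K) + 1) ^ 2 - ((k : K) + 1) ^ 2 / (n.choose k : K) ^ 2) / ((n : K) + 2) := by
  have hn : (n : K) + 2 ≠ 0 := by exact_mod_cast (n + 1).succ_ne_zero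
  induction k with
  | zero =>
    simp only [zero_add, range_one, sum_singleton, Nat.choose_zero_right]
    field_simp
    ring
  | succ k ih =>
    have hkn : k < n := hk
    have hck : (n.choose k : K) ≠ 0 := by exact_mod_cast (Nat.choose_pos hkn.le).ne'
    have hck1 : (n.choose (k + 1) : K) ≠ 0 := by exact_mod_cast (Nat.choose_pos hk).ne'
    -- `(k + 1) / C(n, k) = (n - k) / C(n, k + 1)` turns the sum into a telescoping one
    have hchoose := Nat.cast_succ_mul_choose_succ (R := K) n k
    rw [sum_range_succ, ih hkn.le]
    field_simp
    push_cast
    linear_combination (-(↑k + 1) * ↑(n.choose (k + 1)) - (↑n - ↑k) * ↑(n.choose k)) * hchoose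

theorem sum_range_sub_two_mul_div_choose_sq (n : ℕ) :
    ∑ k ∈ range (n + 1), ((n : K) - 2 * k) / (n.choose k : K) ^ 2 = 0 := by
  rw [sum_range_succ_sub_two_mul_div_choose_sq le_rfl, Nat.choose_self, Nat.cast_one, one_pow,
    div_one, sub_self, zero_div]

theorem sum_range_succ_mul_div_choose_sq (n : ℕ) :
    ∑ k ∈ range (n + 1), ((k : K) + 1) / (n.choose k : K) ^ 2
      = ((n : K) + 2) / 2 * ∑ k ∈ range (n + 1), 1 / (n.choose k : K) ^ 2 := by
  calc ∑ k ∈ range (n + 1), ((k : K) + 1) / (n.choose k : K) ^ 2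
      = ∑ k ∈ range (n + 1), (((n : K) + 2) / 2 * (1 / (n.choose k : K) ^ 2)
          - 1 / 2 * (((n : K) - 2 * k) / (n.choose k : K) ^ 2)) :=
        sum_congr rfl fun k _ => by ring
    _ = ((n : K) + 2) / 2 * ∑ k ∈ range (n + 1), 1 / (n.choose k : K) ^ 2 := by
        rw [sum_sub_distrib, ← mul_sum, ← mul_sum, sum_range_sub_two_mul_div_choose_sq, mul_zero,
          sub_zero]

end Field

theorem harmonicQ_succ_sub (k : ℕ) : harmonicQ (k + 1) - harmonicQ k = 1 / ((k : ℚ) + 1) := by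
  rw [harmonicQ, harmonicQ, sum_range_succ, add_sub_cancel_left]

theorem sum_range_sub_two_mul_mul_harmonicQ_div_choose_sq (n : ℕ) :
    ∑ k ∈ range (n + 1), ((n : ℚ) - 2 * k) * harmonicQ k / (n.choose k : ℚ) ^ 2
      = (∑ k ∈ range (n + 1), 1 / (n.choose k : ℚ) ^ 2) / 2
        - ((n : ℚ) + 1) ^ 2 / ((n : ℚ) + 2) * harmonicQ (n + 1) := by
  have parts := sum_range_by_parts harmonicQ (fun k => ((n : ℚ) - 2 * k) / (n.choose k : ℚ) ^ 2)
    (n + 1)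
  simp only [smul_eq_mul, Nat.add_sub_cancel, harmonicQ_succ_sub] at parts
  have partial_sum : ∀ x ∈ range n,
      1 / ((x : ℚ) + 1) * ∑ i ∈ range (x + 1), ((n : ℚ) - 2 * i) / (n.choose i : ℚ) ^ 2
        = ((n : ℚ) + 1) ^ 2 / ((n : ℚ) + 2) * (1 / ((x : ℚ) + 1))
          - ((x : ℚ) + 1) / (n.choose x : ℚ) ^ 2 / ((n : ℚ) + 2) := fun x hx => by
    rw [sum_range_succ_sub_two_mul_div_choose_sq (mem_range.mp hx).le]
    field_simp
  have hsym := sum_range_succ_mul_div_choose_sq (K := ℚ) n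
  rw [sum_range_succ, Nat.choose_self, Nat.cast_one, one_pow, div_one] at hsym
  calc ∑ k ∈ range (n + 1), ((n : ℚ) - 2 * k) * harmonicQ k / (n.choose k : ℚ) ^ 2
      = ∑ k ∈ range (n + 1), harmonicQ k * (((n : ℚ) - 2 * k) / (n.choose k : ℚ) ^ 2) :=
        sum_congr rfl fun k _ => by ring
    _ = ((∑ x ∈ range n, ((x : ℚ) + 1) / (n.choose x : ℚ) ^ 2)
          - ((n : ℚ) + 1) ^ 2 * harmonicQ n) / ((n : ℚ) + 2) := by
        rw [parts, sum_range_sub_two_mul_div_choose_sq, mul_zero, zero_sub,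
          sum_congr rfl partial_sum, sum_sub_distrib, ← mul_sum, ← sum_div, harmonicQ]
        ring
    _ = _ := by
        rw [eq_sub_of_add_eq hsym, eq_add_of_sub_eq' (harmonicQ_succ_sub n)]
        field_simp
        ring

theorem stmt19 (n : ℕ) :
    ∑ k ∈ range (n + 1), (1 - 2 * ((n : ℚ) - 2 * k) * harmonicQ k) / (n.choose k : ℚ) ^ 2
      = 2 * ((n : ℚ) + 1) ^ 2 / ((n : ℚ) + 2) * harmonicQ (n + 1) := by
  have hsplit :
      ∑ k ∈ range (n + 1), (1 - 2 * ((n : ℚ) - 2 * k) * harmonicQ k) / (n.choose k : ℚ) ^ 2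
        = ∑ k ∈ range (n + 1), 1 / (n.choose k : ℚ) ^ 2
          - 2 * ∑ k ∈ range (n + 1), ((n : ℚ) - 2 * k) * harmonicQ k / (n.choose k : ℚ) ^ 2 := by
    rw [mul_sum, ← sum_sub_distrib]
    exact sum_congr rfl fun k _ => by ring
  rw [hsplit, sum_range_sub_two_mul_mul_harmonicQ_div_choose_sq]
  ring
end
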